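/- Let E₀ denote the space of Hermitian 2ⁿ·2ⁿ-block matrices that are block-diagonal with respect to the computational-basis blocks selected by M^{⊗n} ⊗ I_E (where M(ρ) = P₀ρP₀ + P₁ρP₁), and E₁ its complementary space (matrices with vanishing diagonal blocks), so that every density matrix ρ decomposes uniquely as ρ = ρ₀ + ρ₁ with ρ₀ ∈ E₀, ρ₁ ∈ E₁. Then the minimum over traceless Hermitian N ∈ E₀ of max over density matrices ρ of ‖ρ₁ + N‖₁ is attained at N = 0: min_{N ∈ E₀, Tr N = 0} max_ρ ‖ρ₁ + N‖₁ = max_ρ ‖ρ₁‖₁. -/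

import Mathlib

open scoped BigOperators Matrix ComplexOrder

/-- The trace norm `‖X‖₁ = Tr √(X† X)`. -/
noncomputable def traceNorm {m n : Type*} [Fintype m] [Fintype n] [DecidableEq n]
    (X : Matrix m n ℂ) : ℝ :=
  (((Matrix.posSemidef_conjTranspose_mul_self X).1.eigenvectorUnitary.1 *
      Matrix.diagonal (((↑) : ℝ → ℂ) ∘ (√·) ∘ (Matrix.posSemidef_conjTranspose_mul_self X).1.eigenvalues) *
      (star (Matrix.posSemidef_conjTranspose_mul_self X).1.eigenvectorUnitary : Matrix n n ℂ)).trace).re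

/-- A density matrix: positive semidefinite with trace 1. -/
def IsDensity {n : Type*} [Fintype n] (ρ : Matrix n n ℂ) : Prop :=
  ρ.PosSemidef ∧ ρ.trace = 1

/-- The projection `M^{⊗n} ⊗ I_E` onto the computational-basis diagonal blocks of the
first factor: it keeps the entry at `((b,e),(b',e'))` iff `b = b'`. -/
noncomputable def blockProj {I E : Type*} [DecidableEq I]
    (X : Matrix (I × E) (I × E) ℂ) : Matrix (I × E) (I × E) ℂ :=
  Matrix.of fun p q => if p.1 = q.1 then X p q else 0

namespace PSq

open Matrix
open scoped MatrixOrder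
variable {ι : Type*} [Fintype ι] [DecidableEq ι]

lemma traceNorm_eq (X : Matrix ι ι ℂ) : traceNorm X = (CFC.sqrt (Xᴴ * X)).trace.re := by
  rw [CFC.sqrt_eq_cfc, cfc_nnreal_eq_real _ (Xᴴ * X)
    (nonneg_iff_posSemidef.mpr (posSemidef_conjTranspose_mul_self X)),
    (posSemidef_conjTranspose_mul_self X).1.cfc_eq]
  simp only [IsHermitian.cfc, Real.coe_sqrt, Real.coe_toNNReal', Unitary.conjStarAlgAut_apply,
    traceNorm]
  congr 4
  congr 1
  funext i
  simp [max_eq_left ((posSemidef_conjTranspose_mul_self X).eigenvalues_nonneg i)]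

lemma eq_sqrt_of_sq_eq {A B : Matrix ι ι ℂ} (hB : B.PosSemidef) (h : B ^ 2 = A) :
    B = CFC.sqrt A :=
  (CFC.sqrt_unique (by rw [← pow_two]; exact h) (nonneg_iff_posSemidef.mpr hB)).symm

lemma posSemidef_sqrt (A : Matrix ι ι ℂ) : (CFC.sqrt A).PosSemidef :=
  nonneg_iff_posSemidef.mp (CFC.sqrt_nonneg A)

lemma sq_sqrt {A : Matrix ι ι ℂ} (hA : A.PosSemidef) : CFC.sqrt A ^ 2 = A :=
  CFC.sq_sqrt A (nonneg_iff_posSemidef.mpr hA)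

lemma sqrt_mul_self {A : Matrix ι ι ℂ} (hA : A.PosSemidef) : CFC.sqrt A * CFC.sqrt A = A :=
  CFC.sqrt_mul_sqrt_self A (nonneg_iff_posSemidef.mpr hA)

end PSq

namespace TNorm
open scoped MatrixOrder

variable {ι : Type*} [Fintype ι] [DecidableEq ι]

open Matrix Complex

lemma conj_mul_conj {V D1 D2 : Matrix ι ι ℂ} (hV1 : star V * V = 1) :
    (V * D1 * star V) * (V * D2 * star V) = V * (D1 * D2) * star V := by
  simp only [Matrix.mul_assoc]
  rw [← Matrix.mul_assoc (star V) V, hV1, Matrix.one_mul, ← Matrix.mul_assoc D1]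

lemma traceNorm_eq_sum_abs {X : Matrix ι ι ℂ} (hX : X.IsHermitian) :
    traceNorm X = ∑ i, |hX.eigenvalues i| := by
  set V : Matrix ι ι ℂ := (hX.eigenvectorUnitary : Matrix ι ι ℂ) with hV
  have hVU : V ∈ Matrix.unitaryGroup ι ℂ := hX.eigenvectorUnitary.2
  have hV1 : star V * V = 1 := Matrix.mem_unitaryGroup_iff'.mp hVU
  set B : Matrix ι ι ℂ := V * Matrix.diagonal (fun i => ((|hX.eigenvalues i| : ℝ) : ℂ)) * star V
    with hB
  have hBpsd : B.PosSemidef := by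
    apply Matrix.PosSemidef.mul_mul_conjTranspose_same
    refine Matrix.posSemidef_diagonal_iff.mpr fun i => ?_
    exact Complex.zero_le_real.mpr (abs_nonneg _)
  have hsq : B ^ 2 = Xᴴ * X := by
    rw [pow_two, hB, conj_mul_conj hV1, Matrix.diagonal_mul_diagonal]
    conv_rhs => rw [hX.eq, hX.spectral_theorem]
    rw [Unitary.conjStarAlgAut_apply, conj_mul_conj hV1, Matrix.diagonal_mul_diagonal]
    have he : (fun i => ((|hX.eigenvalues i| : ℝ) : ℂ) * ((|hX.eigenvalues i| : ℝ) : ℂ))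
        = fun i => ((RCLike.ofReal ∘ hX.eigenvalues) i * (RCLike.ofReal ∘ hX.eigenvalues) i) := by
      funext i
      simp only [Function.comp_apply]
      norm_num [← Complex.ofReal_mul, abs_mul_abs_self]
    rw [he]
  have hsqrt : B = CFC.sqrt (Xᴴ * X) :=
    PSq.eq_sqrt_of_sq_eq hBpsd hsq
  rw [PSq.traceNorm_eq, ← hsqrt, hB]
  rw [Matrix.trace_mul_cycle, hV1, Matrix.one_mul, Matrix.trace_diagonal]
  push_cast
  simp

end TNorm

namespace TNormB
open scoped MatrixOrder

open Matrix Complex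
variable {ι : Type*} [Fintype ι] [DecidableEq ι]

lemma traceNorm_congr {X Y : Matrix ι ι ℂ} (hXY : Xᴴ * X = Yᴴ * Y) :
    traceNorm X = traceNorm Y := by
  rw [PSq.traceNorm_eq, PSq.traceNorm_eq]
  have h : CFC.sqrt (Xᴴ * X)
      = CFC.sqrt (Yᴴ * Y) := by
    apply PSq.eq_sqrt_of_sq_eq (PSq.posSemidef_sqrt _)
    rw [PSq.sq_sqrt (Matrix.posSemidef_conjTranspose_mul_self X), hXY]
  rw [h]

lemma traceNorm_neg (X : Matrix ι ι ℂ) : traceNorm (-X) = traceNorm X :=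
  traceNorm_congr (by simp)

lemma traceNorm_zero : traceNorm (0 : Matrix ι ι ℂ) = 0 := by
  have h : (0 : Matrix ι ι ℂ) = CFC.sqrt ((0 : Matrix ι ι ℂ)ᴴ * (0 : Matrix ι ι ℂ)) :=
    PSq.eq_sqrt_of_sq_eq Matrix.PosSemidef.zero (by simp)
  rw [PSq.traceNorm_eq, ← h]
  simp

lemma traceNorm_nonneg {X : Matrix ι ι ℂ} (hX : X.IsHermitian) : 0 ≤ traceNorm X := by
  rw [TNorm.traceNorm_eq_sum_abs hX]
  positivity

lemma traceNorm_conj {U : Matrix ι ι ℂ} (X : Matrix ι ι ℂ)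
    (hU1 : star U * U = 1) (hU2 : U * star U = 1) :
    traceNorm (U * X * star U) = traceNorm X := by
  have key : (U * X * star U)ᴴ * (U * X * star U) = U * (Xᴴ * X) * star U := by
    simp only [Matrix.star_eq_conjTranspose, Matrix.conjTranspose_mul,
      Matrix.conjTranspose_conjTranspose]
    have h1 : Uᴴ * U = 1 := by rw [← Matrix.star_eq_conjTranspose]; exact hU1
    simp only [Matrix.mul_assoc]
    rw [← Matrix.mul_assoc Uᴴ U, h1, Matrix.one_mul]
  set S := CFC.sqrt (Xᴴ * X) with hS
  have hSpsd := PSq.posSemidef_sqrt (Xᴴ * X)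
  have hBpsd : (U * S * star U).PosSemidef := hSpsd.mul_mul_conjTranspose_same U
  have hsq : (U * S * star U) ^ 2 = (U * X * star U)ᴴ * (U * X * star U) := by
    rw [pow_two, TNorm.conj_mul_conj hU1, key,
      PSq.sqrt_mul_self (Matrix.posSemidef_conjTranspose_mul_self X)]
  have hsqrt : U * S * star U = CFC.sqrt
      ((U * X * star U)ᴴ * (U * X * star U)) := PSq.eq_sqrt_of_sq_eq hBpsd hsq
  rw [PSq.traceNorm_eq, ← hsqrt, Matrix.trace_mul_cycle, hU1, Matrix.one_mul, PSq.traceNorm_eq]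

lemma posSemidef_real_smul {A : Matrix ι ι ℂ} (hA : A.PosSemidef) {r : ℝ} (hr : 0 ≤ r) :
    ((r : ℂ) • A).PosSemidef := by
  exact hA.smul (Complex.zero_le_real.mpr hr)

lemma traceNorm_smul (X : Matrix ι ι ℂ) {r : ℝ} (hr : 0 ≤ r) :
    traceNorm ((r : ℂ) • X) = r * traceNorm X := by
  set S := CFC.sqrt (Xᴴ * X) with hS
  have hSpsd := PSq.posSemidef_sqrt (Xᴴ * X)
  have hBpsd : ((r : ℂ) • S).PosSemidef := posSemidef_real_smul hSpsd hr
  have hsq : ((r : ℂ) • S) ^ 2 = ((r:ℂ) • X)ᴴ * ((r:ℂ) • X) := by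
    rw [pow_two, Matrix.conjTranspose_smul, Complex.star_def, Complex.conj_ofReal]
    rw [Matrix.smul_mul, Matrix.mul_smul, Matrix.smul_mul, Matrix.mul_smul,
      PSq.sqrt_mul_self (Matrix.posSemidef_conjTranspose_mul_self X)]
  have hsqrt : (r:ℂ) • S = CFC.sqrt
      (((r:ℂ) • X)ᴴ * ((r:ℂ) • X)) := PSq.eq_sqrt_of_sq_eq hBpsd hsq
  rw [PSq.traceNorm_eq, ← hsqrt, Matrix.trace_smul, PSq.traceNorm_eq]
  simp [Complex.ofReal_mul]
  exact Or.inl rfl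

end TNormB

namespace TNormC

open Matrix Complex
variable {ι : Type*} [Fintype ι] [DecidableEq ι]

lemma col_normSq_one {Q : Matrix ι ι ℂ} (hQ : star Q * Q = 1) (j : ι) :
    ∑ k, Complex.normSq (Q k j) = 1 := by
  have h2 : (star Q * Q) j j = (1 : Matrix ι ι ℂ) j j := by rw [hQ]
  rw [Matrix.mul_apply, Matrix.one_apply_eq] at h2
  have h3 : ∑ k, ((Complex.normSq (Q k j) : ℝ) : ℂ) = 1 := by
    rw [← h2]
    refine Finset.sum_congr rfl fun k _ => ?_
    rw [Matrix.star_apply, Complex.star_def]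
    exact Complex.normSq_eq_conj_mul_self
  have := congrArg Complex.re h3
  simpa using this

/-- dual bound: `re tr (W diag(s) W⋆ M) ≤ ‖M‖₁` for `|s i| ≤ 1`, `W` unitary, `M` Hermitian. -/
lemma re_trace_conj_diag_mul_le {M : Matrix ι ι ℂ} (hM : M.IsHermitian)
    {W : Matrix ι ι ℂ} (hW1 : star W * W = 1) (hW2 : W * star W = 1)
    (s : ι → ℝ) (hs : ∀ i, |s i| ≤ 1) :
    ((W * Matrix.diagonal (fun i => ((s i : ℝ) : ℂ)) * star W * M).trace).re
      ≤ traceNorm M := by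
  set V : Matrix ι ι ℂ := (hM.eigenvectorUnitary : Matrix ι ι ℂ) with hV
  have hVU : V ∈ Matrix.unitaryGroup ι ℂ := hM.eigenvectorUnitary.2
  have hV1 : star V * V = 1 := Matrix.mem_unitaryGroup_iff'.mp hVU
  have hV2 : V * star V = 1 := Matrix.mem_unitaryGroup_iff.mp hVU
  set ν : ι → ℝ := hM.eigenvalues with hν
  set Q : Matrix ι ι ℂ := star W * V with hQdef
  have hQ1 : star Q * Q = 1 := by
    rw [hQdef, Matrix.star_mul, star_star, Matrix.mul_assoc, ← Matrix.mul_assoc W,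
      hW2, Matrix.one_mul, hV1]
  set Ds : Matrix ι ι ℂ := Matrix.diagonal (fun i => ((s i : ℝ) : ℂ)) with hDs
  set Dν : Matrix ι ι ℂ := Matrix.diagonal (RCLike.ofReal ∘ ν) with hDν
  have hMs : M = V * Dν * star V := by
    conv_lhs => rw [hM.spectral_theorem, Unitary.conjStarAlgAut_apply]
  have hprod : W * Ds * star W * M = W * (Ds * Q * Dν * star Q) * star W := by
    rw [hMs, hQdef, Matrix.star_mul, star_star]
    simp only [Matrix.mul_assoc]
    rw [hW2, Matrix.mul_one]
  have htr : (W * Ds * star W * M).trace = (Ds * Q * Dν * star Q).trace := by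
    rw [hprod, Matrix.trace_mul_cycle, hW1, Matrix.one_mul]
  rw [htr]
  have hentry : (Ds * Q * Dν * star Q).trace
      = ∑ k, ∑ j, ((s k : ℂ) * Q k j * (ν j : ℂ)) * (starRingEnd ℂ) (Q k j) := by
    rw [Matrix.trace]
    refine Finset.sum_congr rfl fun k _ => ?_
    rw [Matrix.diag_apply, Matrix.mul_apply]
    refine Finset.sum_congr rfl fun j _ => ?_
    rw [hDs, hDν, Matrix.mul_diagonal, Matrix.diagonal_mul,
      Matrix.star_eq_conjTranspose, Matrix.conjTranspose_apply]
    rfl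
  rw [hentry]
  have hre : (∑ k, ∑ j, ((s k : ℂ) * Q k j * (ν j : ℂ)) * (starRingEnd ℂ) (Q k j)).re
      = ∑ k, ∑ j, s k * ν j * Complex.normSq (Q k j) := by
    rw [Complex.re_sum]
    refine Finset.sum_congr rfl fun k _ => ?_
    rw [Complex.re_sum]
    refine Finset.sum_congr rfl fun j _ => ?_
    have : ((s k : ℂ) * Q k j * (ν j : ℂ)) * (starRingEnd ℂ) (Q k j)
        = ((s k * ν j : ℝ) : ℂ) * ((Complex.normSq (Q k j) : ℝ) : ℂ) := by
      rw [← Complex.mul_conj]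
      push_cast
      ring
    rw [this, ← Complex.ofReal_mul]
    exact Complex.ofReal_re _
  rw [hre, TNorm.traceNorm_eq_sum_abs hM, Finset.sum_comm]
  refine Finset.sum_le_sum fun j _ => ?_
  calc ∑ k, s k * ν j * Complex.normSq (Q k j)
      ≤ ∑ k, |ν j| * Complex.normSq (Q k j) := by
        refine Finset.sum_le_sum fun k _ => ?_
        refine mul_le_mul_of_nonneg_right ?_ (Complex.normSq_nonneg _)
        calc s k * ν j ≤ |s k * ν j| := le_abs_self _
          _ = |s k| * |ν j| := abs_mul _ _
          _ ≤ 1 * |ν j| := mul_le_mul_of_nonneg_right (hs k) (abs_nonneg _)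
          _ = |ν j| := one_mul _
    _ = |ν j| := by rw [← Finset.mul_sum, col_normSq_one hQ1, mul_one]

lemma traceNorm_add_le {A B : Matrix ι ι ℂ} (hA : A.IsHermitian) (hB : B.IsHermitian) :
    traceNorm (A + B) ≤ traceNorm A + traceNorm B := by
  have hC : (A + B).IsHermitian := hA.add hB
  set W : Matrix ι ι ℂ := (hC.eigenvectorUnitary : Matrix ι ι ℂ) with hW
  have hWU : W ∈ Matrix.unitaryGroup ι ℂ := hC.eigenvectorUnitary.2
  have hW1 : star W * W = 1 := Matrix.mem_unitaryGroup_iff'.mp hWU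
  have hW2 : W * star W = 1 := Matrix.mem_unitaryGroup_iff.mp hWU
  set μ : ι → ℝ := hC.eigenvalues with hμ
  set s : ι → ℝ := fun i => if μ i < 0 then -1 else 1 with hs
  have hs1 : ∀ i, |s i| ≤ 1 := by
    intro i; rw [hs]; dsimp only
    split <;> simp
  set Ds : Matrix ι ι ℂ := Matrix.diagonal (fun i => ((s i : ℝ) : ℂ)) with hDs
  have key : traceNorm (A + B) = ((W * Ds * star W * (A + B)).trace).re := by
    have hCs : A + B = W * Matrix.diagonal (RCLike.ofReal ∘ μ) * star W := by
      conv_lhs => rw [hC.spectral_theorem, Unitary.conjStarAlgAut_apply]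
    rw [TNorm.traceNorm_eq_sum_abs hC]
    conv_rhs => rw [hCs]
    rw [TNorm.conj_mul_conj hW1, Matrix.diagonal_mul_diagonal, Matrix.trace_mul_cycle,
      hW1, Matrix.one_mul, Matrix.trace_diagonal]
    rw [Complex.re_sum]
    refine Finset.sum_congr rfl fun i _ => ?_
    have hcast : (RCLike.ofReal ∘ μ) i = ((μ i : ℝ) : ℂ) := rfl
    rw [hcast, ← Complex.ofReal_mul, Complex.ofReal_re, hs]
    dsimp only
    rcases lt_or_ge (μ i) 0 with h | h
    · rw [if_pos h, _root_.abs_of_neg h]; ring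
    · rw [if_neg (not_lt.mpr h), _root_.abs_of_nonneg h]; ring
  rw [key, Matrix.mul_add, Matrix.trace_add, Complex.add_re]
  exact add_le_add (re_trace_conj_diag_mul_le hA hW1 hW2 s hs1)
    (re_trace_conj_diag_mul_le hB hW1 hW2 s hs1)

lemma isHermitian_sum {κ : Type*} (t : Finset κ) (f : κ → Matrix ι ι ℂ)
    (hf : ∀ k, (f k).IsHermitian) : (∑ k ∈ t, f k).IsHermitian := by
  rw [Matrix.IsHermitian, Matrix.conjTranspose_sum]
  exact Finset.sum_congr rfl fun k _ => (hf k).eq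

lemma traceNorm_sum_le {κ : Type*} (t : Finset κ) (f : κ → Matrix ι ι ℂ)
    (hf : ∀ k, (f k).IsHermitian) :
    traceNorm (∑ k ∈ t, f k) ≤ ∑ k ∈ t, traceNorm (f k) := by
  classical
  induction t using Finset.induction with
  | empty => simp [TNormB.traceNorm_zero]
  | insert _ _ hmem ih =>
    rename_i a t'
    rw [Finset.sum_insert hmem, Finset.sum_insert hmem]
    exact le_trans (traceNorm_add_le (hf a) (isHermitian_sum t' f hf))
      (add_le_add le_rfl ih)

end TNormC

namespace TGrp

open Matrix Complex

variable {n : ℕ}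

abbrev Bn (n : ℕ) := Fin n → Fin 2
abbrev Idx (n : ℕ) := Bn n × Bn n

lemma fin2_add_self : ∀ u : Fin 2, u + u = 0 := by decide

lemma bn_add_self (x : Bn n) : x + x = 0 := funext fun i => fin2_add_self _

lemma bn_add_add (x y : Bn n) : x + y + y = x := by
  rw [add_assoc, bn_add_self, add_zero]

lemma bn_eq_iff_add_eq_zero (x y : Bn n) : x + y = 0 ↔ x = y := by
  constructor
  · intro h
    have := congrArg (· + y) h
    simpa [bn_add_add] using this
  · rintro rfl; exact bn_add_self x

noncomputable def sgn (c e : Bn n) : ℂ := ∏ i, ((-1 : ℂ)) ^ ((c i * e i : Fin 2) : ℕ)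

lemma sgn_conj (c e : Bn n) : (starRingEnd ℂ) (sgn c e) = sgn c e := by
  rw [sgn, map_prod]
  refine Finset.prod_congr rfl fun i _ => ?_
  rw [map_pow]
  simp

lemma sgn_mul_self (c e : Bn n) : sgn c e * sgn c e = 1 := by
  rw [sgn, ← Finset.prod_mul_distrib]
  refine Finset.prod_eq_one fun i _ => ?_
  rw [← mul_pow]
  norm_num

lemma sgn_sq (c e : Bn n) : sgn c e ^ 2 = 1 := by rw [pow_two, sgn_mul_self]

lemma sgn_add (c x y : Bn n) : sgn c (x + y) = sgn c x * sgn c y := by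
  rw [sgn, sgn, sgn, ← Finset.prod_mul_distrib]
  refine Finset.prod_congr rfl fun i _ => ?_
  have : ∀ u v w : Fin 2, ((-1 : ℂ)) ^ ((u * (v + w) : Fin 2) : ℕ)
      = (-1 : ℂ) ^ ((u * v : Fin 2) : ℕ) * (-1 : ℂ) ^ ((u * w : Fin 2) : ℕ) := by
    intro u v w
    fin_cases u <;> fin_cases v <;> fin_cases w <;> norm_num [show ((2:Fin 2):ℕ) = 0 from rfl,
      show ((1 + 1 : Fin 2) : ℕ) = 0 from rfl]
  exact this (c i) (x i) (y i)

lemma sum_sgn (e : Bn n) : ∑ c : Bn n, sgn c e = if e = 0 then (2 ^ n : ℂ) else 0 := by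
  have h1 : ∑ c : Bn n, sgn c e
      = ∏ i, ∑ u : Fin 2, ((-1 : ℂ)) ^ ((u * e i : Fin 2) : ℕ) := by
    rw [Finset.prod_univ_sum]
    rw [Finset.sum_congr rfl fun c _ => rfl]
    · rfl
  rw [h1]
  have h2 : ∀ i, ∑ u : Fin 2, ((-1 : ℂ)) ^ ((u * e i : Fin 2) : ℕ)
      = if e i = 0 then 2 else 0 := by
    intro i
    have : ∀ v : Fin 2, ∑ u : Fin 2, ((-1 : ℂ)) ^ ((u * v : Fin 2) : ℕ)
        = if v = 0 then 2 else 0 := by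
      intro v
      fin_cases v <;> norm_num [Fin.sum_univ_two]
    exact this (e i)
  rw [Finset.prod_congr rfl fun i _ => h2 i]
  by_cases he : e = 0
  · subst he
    simp
  · rw [if_neg he]
    obtain ⟨i, hi⟩ := Function.ne_iff.mp he
    exact Finset.prod_eq_zero (Finset.mem_univ i) (if_neg hi)

end TGrp

namespace TGrp

open Matrix Complex

variable {n : ℕ} {t a c : Bn n}

noncomputable def Umat (t a c : Bn n) : Matrix (Idx n) (Idx n) ℂ :=
  Matrix.of fun p q => if q = (p.1 + t, p.2 + a) then sgn c q.2 else 0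

noncomputable def Phi (t a c : Bn n) (X : Matrix (Idx n) (Idx n) ℂ) :
    Matrix (Idx n) (Idx n) ℂ :=
  Matrix.of fun p q => sgn c (p.2 + a) * sgn c (q.2 + a) *
    X (p.1 + t, p.2 + a) (q.1 + t, q.2 + a)

lemma shift_iff (p q : Idx n) : q = (p.1 + t, p.2 + a) ↔ p = (q.1 + t, q.2 + a) := by
  constructor <;> rintro rfl <;> simp [Prod.ext_iff, bn_add_add]

lemma shift_inj {p q : Idx n} (h : ((p.1 + t, p.2 + a) : Idx n) = (q.1 + t, q.2 + a)) :
    p = q := by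
  rw [Prod.ext_iff] at h ⊢
  obtain ⟨h1, h2⟩ := h
  constructor
  · have := congrArg (· + t) h1; simpa [bn_add_add] using this
  · have := congrArg (· + a) h2; simpa [bn_add_add] using this

lemma umat_apply (r x : Idx n) :
    Umat t a c r x = if r = (x.1 + t, x.2 + a) then sgn c x.2 else 0 := by
  rw [Umat, Matrix.of_apply, if_congr (shift_iff r x) rfl rfl]

lemma umat_apply' (p r : Idx n) :
    Umat t a c p r = if r = (p.1 + t, p.2 + a) then sgn c r.2 else 0 := rfl

lemma umat_left : star (Umat t a c) * Umat t a c = 1 := by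
  ext p q
  rw [Matrix.mul_apply]
  by_cases hpq : p = q
  · subst hpq
    rw [Matrix.one_apply_eq]
    rw [Finset.sum_eq_single ((p.1 + t, p.2 + a) : Idx n)
      (fun r _ hr => by
        rw [Matrix.star_apply, umat_apply, if_neg hr, star_zero, zero_mul])
      (fun h => absurd (Finset.mem_univ _) h)]
    rw [Matrix.star_apply, umat_apply, if_pos rfl]
    rw [Complex.star_def, sgn_conj, sgn_mul_self]
  · rw [Matrix.one_apply_ne hpq]
    refine Finset.sum_eq_zero fun r _ => ?_
    by_cases hr : r = ((p.1 + t, p.2 + a) : Idx n)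
    · have hr2 : r ≠ ((q.1 + t, q.2 + a) : Idx n) := fun h2 =>
        hpq (shift_inj (hr ▸ h2 : ((p.1+t, p.2+a) : Idx n) = (q.1+t, q.2+a)))
      rw [umat_apply r q, if_neg hr2, mul_zero]
    · rw [Matrix.star_apply, umat_apply, if_neg hr, star_zero, zero_mul]

lemma umat_right : Umat t a c * star (Umat t a c) = 1 := by
  ext p q
  rw [Matrix.mul_apply]
  by_cases hpq : p = q
  · subst hpq
    rw [Matrix.one_apply_eq]
    rw [Finset.sum_eq_single ((p.1 + t, p.2 + a) : Idx n)
      (fun r _ hr => by rw [umat_apply', if_neg hr, zero_mul])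
      (fun h => absurd (Finset.mem_univ _) h)]
    rw [umat_apply', if_pos rfl, Matrix.star_apply, umat_apply', if_pos rfl]
    rw [Complex.star_def, mul_comm, sgn_conj, sgn_mul_self]
  · refine Eq.trans (Finset.sum_eq_zero fun r _ => ?_) (Matrix.one_apply_ne hpq).symm
    by_cases hr : r = ((p.1 + t, p.2 + a) : Idx n)
    · have hr2 : r ≠ ((q.1 + t, q.2 + a) : Idx n) := fun h2 =>
        hpq (shift_inj (hr ▸ h2 : ((p.1+t, p.2+a) : Idx n) = (q.1+t, q.2+a)))
      rw [Matrix.star_apply, umat_apply' q r, if_neg hr2, star_zero, mul_zero]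
    · rw [umat_apply', if_neg hr, zero_mul]

lemma phi_eq_conj (X : Matrix (Idx n) (Idx n) ℂ) :
    Phi t a c X = Umat t a c * X * star (Umat t a c) := by
  ext p q
  rw [Matrix.mul_apply]
  have h1 : ∀ s, (Umat t a c * X) p s = sgn c (p.2 + a) * X (p.1 + t, p.2 + a) s := by
    intro s
    rw [Matrix.mul_apply]
    rw [Finset.sum_eq_single ((p.1 + t, p.2 + a) : Idx n)
      (fun r _ hr => by rw [umat_apply', if_neg hr, zero_mul])
      (fun h => absurd (Finset.mem_univ _) h)]
    rw [umat_apply', if_pos rfl]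
  rw [Finset.sum_congr rfl fun s _ => by rw [h1 s]]
  rw [Finset.sum_eq_single ((q.1 + t, q.2 + a) : Idx n)
    (fun s _ hs => by
      rw [Matrix.star_apply, umat_apply' q s, if_neg hs, star_zero, mul_zero])
    (fun h => absurd (Finset.mem_univ _) h)]
  rw [Matrix.star_apply, umat_apply' q _, if_pos rfl, Complex.star_def, sgn_conj]
  rw [Phi, Matrix.of_apply]
  ring

lemma phi_sub (X Y : Matrix (Idx n) (Idx n) ℂ) :
    Phi t a c (X - Y) = Phi t a c X - Phi t a c Y := by
  ext p q
  simp only [Phi, Matrix.of_apply, Matrix.sub_apply]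
  ring

lemma phi_add (X Y : Matrix (Idx n) (Idx n) ℂ) :
    Phi t a c (X + Y) = Phi t a c X + Phi t a c Y := by
  ext p q
  simp only [Phi, Matrix.of_apply, Matrix.add_apply]
  ring

lemma phi_phi (X : Matrix (Idx n) (Idx n) ℂ) : Phi t a c (Phi t a c X) = X := by
  ext p q
  rw [Phi, Matrix.of_apply, Phi, Matrix.of_apply]
  simp only [bn_add_add]
  have e1 := sgn_mul_self c p.2
  have e2 := sgn_mul_self c q.2
  have e3 := sgn_mul_self c a
  rw [sgn_add c p.2 a, sgn_add c q.2 a]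
  calc sgn c p.2 * sgn c a * (sgn c q.2 * sgn c a) * (sgn c p.2 * sgn c q.2 * X p q)
      = (sgn c p.2 * sgn c p.2) * ((sgn c q.2 * sgn c q.2) * ((sgn c a * sgn c a) * X p q)) := by
        ring
    _ = X p q := by rw [e1, e2, e3]; ring

lemma blockProj_phi (X : Matrix (Idx n) (Idx n) ℂ) :
    blockProj (Phi t a c X) = Phi t a c (blockProj X) := by
  ext p q
  simp only [blockProj, Phi, Matrix.of_apply]
  by_cases h : p.1 = q.1
  · rw [if_pos h, if_pos (show p.1 + t = q.1 + t by rw [h])]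
  · rw [if_neg h, if_neg (fun hh : p.1 + t = q.1 + t => h (by
      have := congrArg (· + t) hh; simpa [bn_add_add] using this)), mul_zero]

lemma phi_psd {X : Matrix (Idx n) (Idx n) ℂ} (hX : X.PosSemidef) :
    (Phi t a c X).PosSemidef := by
  rw [phi_eq_conj, Matrix.star_eq_conjTranspose]
  exact hX.mul_mul_conjTranspose_same _

lemma phi_trace (X : Matrix (Idx n) (Idx n) ℂ) : (Phi t a c X).trace = X.trace := by
  rw [phi_eq_conj, Matrix.trace_mul_cycle, umat_left, Matrix.one_mul]

lemma phi_herm {X : Matrix (Idx n) (Idx n) ℂ} (hX : X.IsHermitian) :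
    (Phi t a c X).IsHermitian := by
  rw [phi_eq_conj, Matrix.IsHermitian]
  simp only [Matrix.star_eq_conjTranspose, Matrix.conjTranspose_mul,
    Matrix.conjTranspose_conjTranspose]
  rw [hX.eq]
  simp [Matrix.mul_assoc]

lemma traceNorm_phi (X : Matrix (Idx n) (Idx n) ℂ) :
    traceNorm (Phi t a c X) = traceNorm X := by
  rw [phi_eq_conj]
  exact TNormB.traceNorm_conj X umat_left umat_right

lemma sum_phi {N : Matrix (Idx n) (Idx n) ℂ} (hbp : blockProj N = N) (htr : N.trace = 0) :
    ∑ g : Bn n × Bn n × Bn n, Phi g.1 g.2.1 g.2.2 N = 0 := by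
  have hz : ∀ r s : Idx n, r.1 ≠ s.1 → N r s = 0 := by
    intro r s h
    rw [← hbp]
    simp [blockProj, h]
  ext p q
  rw [Matrix.sum_apply, Matrix.zero_apply]
  have hterm : ∀ g : Bn n × Bn n × Bn n, Phi g.1 g.2.1 g.2.2 N p q
      = sgn g.2.2 p.2 * sgn g.2.2 q.2
        * N (p.1 + g.1, p.2 + g.2.1) (q.1 + g.1, q.2 + g.2.1) := by
    intro g
    rw [Phi, Matrix.of_apply, sgn_add g.2.2 p.2 g.2.1, sgn_add g.2.2 q.2 g.2.1]
    have e3 := sgn_mul_self g.2.2 g.2.1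
    set K := N (p.1 + g.1, p.2 + g.2.1) (q.1 + g.1, q.2 + g.2.1)
    calc sgn g.2.2 p.2 * sgn g.2.2 g.2.1 * (sgn g.2.2 q.2 * sgn g.2.2 g.2.1) * K
        = (sgn g.2.2 g.2.1 * sgn g.2.2 g.2.1) * (sgn g.2.2 p.2 * sgn g.2.2 q.2 * K) := by ring
      _ = sgn g.2.2 p.2 * sgn g.2.2 q.2 * K := by rw [e3, one_mul]
  rw [Finset.sum_congr rfl fun g _ => hterm g]
  by_cases hp1 : p.1 = q.1
  · by_cases hp2 : p.2 = q.2
    · -- p = q : use trace = 0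
      have hpq : p = q := Prod.ext hp1 hp2
      subst hpq
      simp only [Fintype.sum_prod_type]
      have hinner : ∀ tt aa : Bn n,
          ∑ cc : Bn n, sgn cc p.2 * sgn cc p.2 * N (p.1 + tt, p.2 + aa) (p.1 + tt, p.2 + aa)
            = (Fintype.card (Bn n)) • N (p.1 + tt, p.2 + aa) (p.1 + tt, p.2 + aa) := by
        intro tt aa
        rw [Finset.sum_congr rfl fun cc _ => by rw [sgn_mul_self, one_mul]]
        rw [Finset.sum_const, Finset.card_univ]
      rw [Finset.sum_congr rfl fun tt _ => Finset.sum_congr rfl fun aa _ => hinner tt aa]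
      have hinv2 : Function.Involutive (fun x : Bn n => p.2 + x) := by
        intro x; show _ + (_ + _) = _; rw [← add_assoc, bn_add_self, zero_add]
      have hinv1 : Function.Involutive (fun x : Bn n => p.1 + x) := by
        intro x; show _ + (_ + _) = _; rw [← add_assoc, bn_add_self, zero_add]
      have hdiag : ∑ tt : Bn n, ∑ aa : Bn n,
          N (p.1 + tt, p.2 + aa) (p.1 + tt, p.2 + aa) = 0 := by
        have h1 : ∀ tt : Bn n, ∑ aa : Bn n, N (p.1 + tt, p.2 + aa) (p.1 + tt, p.2 + aa)
            = ∑ e : Bn n, N (p.1 + tt, e) (p.1 + tt, e) := fun tt =>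
          Fintype.sum_bijective _ hinv2.bijective _ _ (fun aa => rfl)
        rw [Finset.sum_congr rfl fun tt _ => h1 tt]
        have h2 : ∑ tt : Bn n, ∑ e : Bn n, N (p.1 + tt, e) (p.1 + tt, e)
            = ∑ b : Bn n, ∑ e : Bn n, N (b, e) (b, e) :=
          Fintype.sum_bijective _ hinv1.bijective _ _ (fun tt => rfl)
        rw [h2]
        have h3 : ∑ b : Bn n, ∑ e : Bn n, N (b, e) (b, e) = N.trace := by
          rw [Matrix.trace, Fintype.sum_prod_type]
          rfl
        rw [h3, htr]
      calc ∑ tt : Bn n, ∑ aa : Bn n,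
            (Fintype.card (Bn n)) • N (p.1 + tt, p.2 + aa) (p.1 + tt, p.2 + aa)
          = (Fintype.card (Bn n)) • ∑ tt : Bn n, ∑ aa : Bn n,
              N (p.1 + tt, p.2 + aa) (p.1 + tt, p.2 + aa) := by
            rw [Finset.smul_sum]
            exact Finset.sum_congr rfl fun tt _ => (Finset.smul_sum).symm
        _ = 0 := by rw [hdiag, smul_zero]
    · -- p.2 ≠ q.2 : character sum vanishes
      simp only [Fintype.sum_prod_type]
      refine Finset.sum_eq_zero fun tt _ => Finset.sum_eq_zero fun aa _ => ?_
      rw [← Finset.sum_mul]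
      rw [Finset.sum_congr rfl fun cc _ => (sgn_add cc p.2 q.2).symm, sum_sgn,
        if_neg (fun h => hp2 ((bn_eq_iff_add_eq_zero p.2 q.2).mp h)), zero_mul]
  · -- p.1 ≠ q.1 : matrix entries vanish
    refine Finset.sum_eq_zero fun g _ => ?_
    rw [hz _ _ (fun h : p.1 + g.1 = q.1 + g.1 => hp1 (by
      have := congrArg (· + g.1) h; simpa [bn_add_add] using this)), mul_zero]

end TGrp

namespace TMain

open Matrix Complex TGrp

section Generic
variable {ι : Type*} [Fintype ι] [DecidableEq ι]

lemma psd_traceNorm {X : Matrix ι ι ℂ} (hX : X.PosSemidef) : traceNorm X = X.trace.re := by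
  rw [TNorm.traceNorm_eq_sum_abs hX.isHermitian,
    Finset.sum_congr rfl (fun i _ => _root_.abs_of_nonneg (hX.eigenvalues_nonneg i))]
  set V : Matrix ι ι ℂ := (hX.isHermitian.eigenvectorUnitary : Matrix ι ι ℂ) with hV
  have hV1 : star V * V = 1 :=
    Matrix.mem_unitaryGroup_iff'.mp hX.isHermitian.eigenvectorUnitary.2
  have htr : X.trace
      = (Matrix.diagonal (RCLike.ofReal ∘ hX.isHermitian.eigenvalues) : Matrix ι ι ℂ).trace := by
    conv_lhs => rw [hX.isHermitian.spectral_theorem]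
    rw [Unitary.conjStarAlgAut_apply]
    rw [Matrix.trace_mul_cycle, hV1, Matrix.one_mul]
  rw [htr, Matrix.trace_diagonal, Complex.re_sum]
  exact Finset.sum_congr rfl fun i _ => rfl

lemma posSemidef_sum {κ : Type*} (t : Finset κ) (f : κ → Matrix ι ι ℂ)
    (hf : ∀ k, (f k).PosSemidef) : (∑ k ∈ t, f k).PosSemidef := by
  classical
  induction t using Finset.induction with
  | empty => simpa using Matrix.PosSemidef.zero
  | insert _ _ hmem ih =>
    rename_i a t'
    rw [Finset.sum_insert hmem]
    exact (hf a).add ih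

end Generic

variable {n : ℕ}

lemma isDensity_traceNorm {ρ : Matrix (Idx n) (Idx n) ℂ} (h : IsDensity ρ) :
    traceNorm ρ = 1 := by
  rw [psd_traceNorm h.1, h.2, Complex.one_re]

lemma blockProj_herm {X : Matrix (Idx n) (Idx n) ℂ} (hX : X.IsHermitian) :
    (blockProj X).IsHermitian := by
  rw [Matrix.IsHermitian]
  ext p q
  rw [Matrix.conjTranspose_apply]
  simp only [blockProj, Matrix.of_apply]
  by_cases h : p.1 = q.1
  · rw [if_pos h.symm, if_pos h, ← Matrix.conjTranspose_apply, hX.eq]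
  · rw [if_neg (fun hh => h hh.symm), if_neg h, star_zero]

lemma blockProj_psd {ρ : Matrix (Idx n) (Idx n) ℂ} (hρ : ρ.PosSemidef) :
    (blockProj ρ).PosSemidef := by
  set D : Bn n → Matrix (Idx n) (Idx n) ℂ :=
    fun b => Matrix.diagonal (fun p : Idx n => if p.1 = b then (1 : ℂ) else 0) with hD
  have hdec : blockProj ρ = ∑ b : Bn n, D b * ρ * (D b)ᴴ := by
    ext p q
    rw [Matrix.sum_apply]
    have hterm : ∀ b, (D b * ρ * (D b)ᴴ) p q
        = (if p.1 = b then (1:ℂ) else 0) * ρ p q * star (if q.1 = b then (1:ℂ) else 0) := by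
      intro b
      rw [hD, Matrix.diagonal_conjTranspose, Matrix.mul_diagonal, Matrix.diagonal_mul]
      rfl
    rw [Finset.sum_congr rfl fun b _ => hterm b]
    simp only [blockProj, Matrix.of_apply]
    by_cases h : p.1 = q.1
    · rw [if_pos h]
      rw [Finset.sum_eq_single p.1
        (fun b _ hb => by rw [if_neg (fun hh => hb hh.symm), zero_mul, zero_mul])
        (fun h => absurd (Finset.mem_univ _) h)]
      rw [if_pos rfl, if_pos h.symm, one_mul, star_one, mul_one]
    · rw [if_neg h]
      refine Eq.symm (Finset.sum_eq_zero fun b _ => ?_)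
      by_cases hb : p.1 = b
      · rw [if_neg (fun hh : q.1 = b => h (hb.trans hh.symm)), star_zero, mul_zero]
      · rw [if_neg hb, zero_mul, zero_mul]
  rw [hdec]
  exact posSemidef_sum _ _ fun b => hρ.mul_mul_conjTranspose_same _

lemma blockProj_trace (X : Matrix (Idx n) (Idx n) ℂ) : (blockProj X).trace = X.trace := by
  simp only [Matrix.trace]
  refine Finset.sum_congr rfl fun p _ => ?_
  simp [Matrix.diag_apply, blockProj]

lemma blockProj_zero : blockProj (0 : Matrix (Idx n) (Idx n) ℂ) = 0 := by
  ext p q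
  simp [blockProj]

lemma part_herm {ρ : Matrix (Idx n) (Idx n) ℂ} (hρ : IsDensity ρ) :
    (ρ - blockProj ρ).IsHermitian :=
  hρ.1.isHermitian.sub (blockProj_herm hρ.1.isHermitian)

lemma traceNorm_bound {ρ N : Matrix (Idx n) (Idx n) ℂ} (hρ : IsDensity ρ)
    (hN : N.IsHermitian) : traceNorm (ρ - blockProj ρ + N) ≤ 2 + traceNorm N := by
  have step1 := TNormC.traceNorm_add_le (part_herm hρ) hN
  have step2 : traceNorm (ρ - blockProj ρ) ≤ 2 := by
    have hsub : ρ - blockProj ρ = ρ + -(blockProj ρ) := sub_eq_add_neg _ _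
    have h3 := TNormC.traceNorm_add_le hρ.1.isHermitian (blockProj_herm hρ.1.isHermitian).neg
    rw [← hsub, TNormB.traceNorm_neg] at h3
    have h4 : traceNorm ρ = 1 := isDensity_traceNorm hρ
    have h5 : traceNorm (blockProj ρ) = 1 :=
      isDensity_traceNorm ⟨blockProj_psd hρ.1, by rw [blockProj_trace, hρ.2]⟩
    rw [h4, h5] at h3
    linarith
  linarith

lemma uniform_exists :
    ∃ ρ : Matrix (Idx n) (Idx n) ℂ, IsDensity ρ ∧ ρ - blockProj ρ = 0 := by
  have hcard : (0 : ℝ) < (Fintype.card (Idx n) : ℝ) := Nat.cast_pos.mpr Fintype.card_pos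
  refine ⟨(((Fintype.card (Idx n) : ℝ)⁻¹ : ℝ) : ℂ) • 1, ⟨?_, ?_⟩, ?_⟩
  · exact TNormB.posSemidef_real_smul Matrix.PosSemidef.one (inv_nonneg.mpr hcard.le)
  · rw [Matrix.trace_smul, Matrix.trace_one, smul_eq_mul]
    push_cast
    field_simp
  · rw [sub_eq_zero]
    ext p q
    simp only [blockProj, Matrix.of_apply]
    by_cases h : p.1 = q.1
    · rw [if_pos h]
    · rw [if_neg h, Matrix.smul_apply,
        Matrix.one_apply_ne (fun hh => h (congrArg Prod.fst hh)), smul_zero]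

end TMain

/-- The minimum over traceless Hermitian block-diagonal `N` of
`max_ρ ‖ρ₁ + N‖₁` is attained at `N = 0`:
`min_{N ∈ E₀, Tr N = 0} max_ρ ‖ρ₁ + N‖₁ = max_ρ ‖ρ₁‖₁`, where `ρ₁ = ρ − Π₀(ρ)` is the
off-block-diagonal part of a density matrix `ρ` on `B̄ ⊗ E`, both of dimension `2ⁿ`. -/
theorem optimal_block_matrix (n : ℕ) :
    sInf {r : ℝ | ∃ N : Matrix ((Fin n → Fin 2) × (Fin n → Fin 2))
          ((Fin n → Fin 2) × (Fin n → Fin 2)) ℂ,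
        N.IsHermitian ∧ blockProj N = N ∧ N.trace = 0 ∧
        r = sSup {s : ℝ | ∃ ρ, IsDensity ρ ∧ s = traceNorm ((ρ - blockProj ρ) + N)}}
      = sSup {s : ℝ | ∃ ρ : Matrix ((Fin n → Fin 2) × (Fin n → Fin 2))
            ((Fin n → Fin 2) × (Fin n → Fin 2)) ℂ,
          IsDensity ρ ∧ s = traceNorm (ρ - blockProj ρ)} := by
  classical
  open TGrp TMain TNormB TNormC in
  set SN : Matrix (Idx n) (Idx n) ℂ → Set ℝ := fun N =>
    {s : ℝ | ∃ ρ, IsDensity ρ ∧ s = traceNorm ((ρ - blockProj ρ) + N)} with hSN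
  have hRHS_eq : {s : ℝ | ∃ ρ : Matrix ((Fin n → Fin 2) × (Fin n → Fin 2))
        ((Fin n → Fin 2) × (Fin n → Fin 2)) ℂ,
      IsDensity ρ ∧ s = traceNorm (ρ - blockProj ρ)} = SN 0 := by
    ext s
    constructor
    · rintro ⟨ρ, hρ, rfl⟩; exact ⟨ρ, hρ, by rw [add_zero]⟩
    · rintro ⟨ρ, hρ, rfl⟩; exact ⟨ρ, hρ, by rw [add_zero]⟩
  have hne : ∀ N : Matrix (Idx n) (Idx n) ℂ, (SN N).Nonempty := by
    intro N
    obtain ⟨ρ, hρ, hzero⟩ := TMain.uniform_exists (n := n)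
    exact ⟨traceNorm ((ρ - blockProj ρ) + N), ρ, hρ, rfl⟩
  have hbdd : ∀ N : Matrix (Idx n) (Idx n) ℂ, N.IsHermitian → BddAbove (SN N) := by
    intro N hN
    refine ⟨2 + traceNorm N, ?_⟩
    rintro s ⟨ρ, hρ, rfl⟩
    exact TMain.traceNorm_bound hρ hN
  -- the key comparison
  have key : ∀ N : Matrix (Idx n) (Idx n) ℂ, N.IsHermitian → blockProj N = N →
      N.trace = 0 → sSup (SN 0) ≤ sSup (SN N) := by
    intro N hN hbp htr0
    refine csSup_le (hne 0) ?_
    rintro s ⟨σ, hσ, rfl⟩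
    set σ₁ := σ - blockProj σ with hσ₁
    have hσ₁h : σ₁.IsHermitian := TMain.part_herm hσ
    have cardpos : (0:ℝ) < (Fintype.card (Bn n × Bn n × Bn n) : ℝ) :=
      Nat.cast_pos.mpr Fintype.card_pos
    have hsum : ∑ g : Bn n × Bn n × Bn n, (σ₁ + Phi g.1 g.2.1 g.2.2 N)
        = (((Fintype.card (Bn n × Bn n × Bn n) : ℝ)) : ℂ) • σ₁ := by
      rw [Finset.sum_add_distrib, TGrp.sum_phi hbp htr0, add_zero, Finset.sum_const,
        Finset.card_univ, ← Nat.cast_smul_eq_nsmul ℂ]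
      norm_num
    have hterm_le : ∀ g : Bn n × Bn n × Bn n,
        traceNorm (σ₁ + Phi g.1 g.2.1 g.2.2 N) ≤ sSup (SN N) := by
      intro g
      have hval : traceNorm (σ₁ + Phi g.1 g.2.1 g.2.2 N)
          = traceNorm ((Phi g.1 g.2.1 g.2.2 σ - blockProj (Phi g.1 g.2.1 g.2.2 σ)) + N) := by
        rw [TGrp.blockProj_phi, ← TGrp.phi_sub]
        conv_lhs => rw [← TGrp.traceNorm_phi (t := g.1) (a := g.2.1) (c := g.2.2)
          (σ₁ + Phi g.1 g.2.1 g.2.2 N)]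
        rw [TGrp.phi_add, TGrp.phi_phi]
      rw [hval]
      refine le_csSup (hbdd N hN) ⟨Phi g.1 g.2.1 g.2.2 σ,
        ⟨TGrp.phi_psd hσ.1, by rw [TGrp.phi_trace, hσ.2]⟩, rfl⟩
    have h1 : (Fintype.card (Bn n × Bn n × Bn n) : ℝ) * traceNorm (σ₁ + 0)
        ≤ (Fintype.card (Bn n × Bn n × Bn n) : ℝ) * sSup (SN N) := by
      rw [add_zero]
      calc (Fintype.card (Bn n × Bn n × Bn n) : ℝ) * traceNorm σ₁
          = traceNorm ((((Fintype.card (Bn n × Bn n × Bn n) : ℝ)) : ℂ) • σ₁) :=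
            (TNormB.traceNorm_smul σ₁ cardpos.le).symm
        _ = traceNorm (∑ g : Bn n × Bn n × Bn n, (σ₁ + Phi g.1 g.2.1 g.2.2 N)) := by
            rw [hsum]
        _ ≤ ∑ g : Bn n × Bn n × Bn n, traceNorm (σ₁ + Phi g.1 g.2.1 g.2.2 N) :=
            TNormC.traceNorm_sum_le _ _ (fun g => hσ₁h.add (TGrp.phi_herm hN))
        _ ≤ ∑ _g : Bn n × Bn n × Bn n, sSup (SN N) :=
            Finset.sum_le_sum (fun g _ => hterm_le g)
        _ = (Fintype.card (Bn n × Bn n × Bn n) : ℝ) * sSup (SN N) := by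
            rw [Finset.sum_const, Finset.card_univ, nsmul_eq_mul]
    exact le_of_mul_le_mul_left h1 cardpos
  have hmem0 : ∃ N : Matrix (Idx n) (Idx n) ℂ,
      N.IsHermitian ∧ blockProj N = N ∧ N.trace = 0 ∧
        sSup {s : ℝ | ∃ ρ : Matrix ((Fin n → Fin 2) × (Fin n → Fin 2))
            ((Fin n → Fin 2) × (Fin n → Fin 2)) ℂ,
          IsDensity ρ ∧ s = traceNorm (ρ - blockProj ρ)} = sSup (SN N) :=
    ⟨0, Matrix.isHermitian_zero, TMain.blockProj_zero, Matrix.trace_zero _ _,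
      by rw [hRHS_eq]⟩
  apply le_antisymm
  · apply csInf_le
    · refine ⟨0, ?_⟩
      rintro r ⟨N, hN, _, _, rfl⟩
      refine Real.sSup_nonneg ?_
      rintro s ⟨ρ, hρ, rfl⟩
      exact TNormB.traceNorm_nonneg ((TMain.part_herm hρ).add hN)
    · obtain ⟨N, h1, h2, h3, h4⟩ := hmem0
      exact ⟨N, h1, h2, h3, h4⟩
  · obtain ⟨N0, h1, h2, h3, h4⟩ := hmem0
    refine le_csInf ⟨_, N0, h1, h2, h3, h4⟩ ?_
    rintro r ⟨N, hN, hbp, htr0, rfl⟩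
    rw [hRHS_eq]
    exact key N hN hbp htr0
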